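/- arXiv:0707.4333 — 6 statements merged into one kernel-verified Lean document; each statement's English description precedes it below -/
import Mathlib

section
/- With notation as above, for each point (y) in the image A, the fiber φ₂⁻¹(y) = {ω ∈ Ω : Σ ωi Qi(y) ≥ 0} is a nonempty convex-cone section of the sphere: it equals the intersection of the unit sphere in R^m with a convex cone, and hence is contractible. -/
/-!
The fiber is the unit-sphere section of the cone `C` of vectors `ω` with `ωⱼ ≤ 0` for all `j` and
`⟪q, ω⟫ ≥ 0`, where `qⱼ = Qⱼ(y)`. If `Qᵢ(y) ≤ 0`, then `v = -eᵢ` lies in the section while `-v = eᵢ`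
is not in `C`. Normalising the segment from `u` to `v` then contracts the section onto `v`: the
segment stays in `C` by convexity and avoids `0` because `u ≠ -v`.
-/

open Metric Set
open scoped RealInnerProductSpace

section SphereSection

variable {E : Type*} [NormedAddCommGroup E] [InnerProductSpace ℝ E]

theorem sub_smul_add_smul_ne_zero_of_ne_neg {u v : E} (hu : ‖u‖ = 1) (hv : ‖v‖ = 1)
    (huv : u ≠ -v) (t : ℝ) : (1 - t) • u + t • v ≠ 0 := by
  intro h
  -- pairing with `u + v` kills the dependence on `t`
  have hpair : ⟪(1 - t) • u + t • v, u + v⟫ = 1 + ⟪u, v⟫ := by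
    simp only [inner_add_left, inner_add_right, real_inner_smul_left, real_inner_self_eq_norm_sq,
      hu, hv, real_inner_comm u v]
    ring
  rw [h, inner_zero_left] at hpair
  exact huv ((inner_eq_neg_one_iff_of_norm_eq_one (𝕜 := ℝ) hu hv).1 (by linarith))

theorem inv_norm_smul_mem_sphere_inter {C : PointedCone ℝ E} {x : E} (hx : x ∈ C) (hx0 : x ≠ 0) :
    ‖x‖⁻¹ • x ∈ sphere (0 : E) 1 ∩ C :=
  ⟨by simp [norm_smul, hx0], C.smul_mem (inv_nonneg.2 (norm_nonneg x)) hx⟩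

theorem contractibleSpace_sphere_inter_pointedCone (C : PointedCone ℝ E) {v : E}
    (hv : v ∈ sphere (0 : E) 1 ∩ C) (hnv : -v ∉ C) :
    ContractibleSpace (sphere (0 : E) 1 ∩ C : Set E) := by
  set S := (sphere (0 : E) 1 ∩ C : Set E)
  let w : unitInterval × S → E := fun p => (1 - (p.1 : ℝ)) • (p.2 : E) + (p.1 : ℝ) • v
  have hw_ne : ∀ p, w p ≠ 0 := fun p =>
    sub_smul_add_smul_ne_zero_of_ne_neg (by simpa using p.2.2.1) (by simpa using hv.1)
      (fun h => hnv (h ▸ p.2.2.2)) _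
  have hw_mem : ∀ p, w p ∈ C := fun p =>
    C.convex p.2.2.2 hv.2 (by linarith [p.1.2.2]) p.1.2.1 (by ring)
  have hw_cont : Continuous w := by fun_prop
  rw [contractible_iff_id_nullhomotopic]
  refine ⟨⟨v, hv⟩, ⟨⟨⟨fun p => ⟨‖w p‖⁻¹ • w p, inv_norm_smul_mem_sphere_inter (hw_mem p) (hw_ne p)⟩,
    ?_⟩, fun u => ?_, fun u => ?_⟩⟩⟩
  · exact ((hw_cont.norm.inv₀ fun p => norm_ne_zero_iff.2 (hw_ne p)).smul hw_cont).subtype_mk _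
  · ext
    simp [w, (by simpa using u.2.1 : ‖(u : E)‖ = 1)]
  · ext
    simp [w, (by simpa using hv.1 : ‖v‖ = 1)]

end SphereSection

theorem EuclideanSpace.mem_dual_insert_neg_single {ι : Type*} [Fintype ι] [DecidableEq ι]
    (q ω : EuclideanSpace ℝ ι) :
    ω ∈ PointedCone.dual (innerₗ _) (insert q (range fun i => -EuclideanSpace.single i (1 : ℝ))) ↔
      0 ≤ ⟪q, ω⟫ ∧ ∀ i, ω i ≤ 0 := by
  simp [EuclideanSpace.inner_single_left]

theorem fiber_is_contractible_convex_cone_section_general (ℓ m : ℕ)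
    (Q : Fin m → EuclideanSpace ℝ (Fin (ℓ + 1)) → ℝ)
    (Ω : Set (EuclideanSpace ℝ (Fin m)))
    (hΩ : Ω = {ω | ‖ω‖ = 1 ∧ ∀ i, ω i ≤ 0})
    (y : EuclideanSpace ℝ (Fin (ℓ + 1))) (hyA : ∃ i, Q i y ≤ 0)
    (fib : Set (EuclideanSpace ℝ (Fin m)))
    (hfib : fib = {ω | ω ∈ Ω ∧ 0 ≤ ∑ i, ω i * Q i y}) :
    fib.Nonempty ∧
      (∃ c : Set (EuclideanSpace ℝ (Fin m)), Convex ℝ c ∧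
        (∀ a ∈ c, ∀ t : ℝ, 0 ≤ t → t • a ∈ c) ∧
        fib = Metric.sphere (0 : EuclideanSpace ℝ (Fin m)) 1 ∩ c) ∧
      ContractibleSpace fib := by
  obtain ⟨i, hi⟩ := hyA
  set q : EuclideanSpace ℝ (Fin m) := WithLp.toLp 2 fun j => Q j y
  have hq : ∀ ω : EuclideanSpace ℝ (Fin m), ⟪q, ω⟫ = ∑ j, ω j * Q j y := by
    simp [q, PiLp.inner_apply]
  let C := PointedCone.dual (innerₗ _) (insert q (range fun j => -EuclideanSpace.single j (1 : ℝ)))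
  have hfibC : fib = sphere 0 1 ∩ C := by
    ext ω
    simp only [hfib, hΩ, mem_ofPred_eq, mem_inter_iff, mem_sphere_zero_iff_norm, SetLike.mem_coe,
      C, EuclideanSpace.mem_dual_insert_neg_single, hq]
    tauto
  have hv : -EuclideanSpace.single i (1 : ℝ) ∈ sphere 0 1 ∩ C := by
    refine ⟨by simp, (EuclideanSpace.mem_dual_insert_neg_single _ _).2 ⟨?_, fun j => ?_⟩⟩
    · simpa [hq] using hi
    · by_cases hj : j = i <;> simp [hj]
  have hnv : -(-EuclideanSpace.single i (1 : ℝ)) ∉ C := fun h =>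
    absurd (((EuclideanSpace.mem_dual_insert_neg_single _ _).1 h).2 i) (by simp)
  refine ⟨hfibC ▸ ⟨_, hv⟩, ⟨C, C.convex, fun a ha t ht => C.smul_mem ht ha, hfibC⟩, ?_⟩
  rw [hfibC]
  exact contractibleSpace_sphere_inter_pointedCone C hv hnv

/-- With `Q₁, …, Q_m` quadratic forms on `ℝ^(ℓ+1)` and
`Ω = {ω ∈ ℝ^m : |ω| = 1, ωᵢ ≤ 0 ∀ i}`, for each unit vector `y` with `Qᵢ(y) ≤ 0` for some `i`
(i.e. a point of the image `A`), the fiber `{ω ∈ Ω : ∑ ωᵢ Qᵢ(y) ≥ 0}` is nonempty, equals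
the intersection of the unit sphere of `ℝ^m` with a convex cone, and is contractible. -/
theorem fiber_is_contractible_convex_cone_section (ℓ m : ℕ)
    (M : Fin m → Matrix (Fin (ℓ + 1)) (Fin (ℓ + 1)) ℝ)
    (hM : ∀ i, (M i).IsSymm)
    (Q : Fin m → EuclideanSpace ℝ (Fin (ℓ + 1)) → ℝ)
    (hQ : ∀ i y, Q i y = ∑ a, ∑ b, M i a b * y a * y b)
    (Ω : Set (EuclideanSpace ℝ (Fin m)))
    (hΩ : Ω = {ω | ‖ω‖ = 1 ∧ ∀ i, ω i ≤ 0})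
    (y : EuclideanSpace ℝ (Fin (ℓ + 1))) (hy : ‖y‖ = 1) (hyA : ∃ i, Q i y ≤ 0)
    (fib : Set (EuclideanSpace ℝ (Fin m)))
    (hfib : fib = {ω | ω ∈ Ω ∧ 0 ≤ ∑ i, ω i * Q i y}) :
    fib.Nonempty ∧
      (∃ c : Set (EuclideanSpace ℝ (Fin m)), Convex ℝ c ∧
        (∀ a ∈ c, ∀ t : ℝ, 0 ≤ t → t • a ∈ c) ∧
        fib = Metric.sphere (0 : EuclideanSpace ℝ (Fin m)) 1 ∩ c) ∧
      ContractibleSpace fib :=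
  fiber_is_contractible_convex_cone_section_general ℓ m Q Ω hΩ y hyA fib hfib
end

section
/- Let Q be a real quadratic form on R^(ℓ+1) with eigenvalues λ₀ ≤ λ₁ ≤ ... ≤ λ_ℓ (of its symmetric matrix) and index j (number of negative eigenvalues). Then the set {y ∈ S^ℓ : Q(y) ≥ 0} is homotopy equivalent to a sphere of dimension ℓ − j. -/
open scoped BigOperators

/-!
In an orthonormal eigenbasis `Q = ∑ μᵢ xᵢ²`. Shrinking the coordinates with `μᵢ < 0` linearly to
zero only increases `Q`, and it never reaches the origin from a unit vector with `Q ≥ 0`, because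
`Q` is negative definite on the span of the eigenvectors with `μᵢ < 0`. After normalizing, this
deforms `{Q ≥ 0} ∩ S^ℓ` onto the unit sphere of the span of the eigenvectors with `μᵢ ≥ 0`, a sphere
of dimension `ℓ - j`.
-/

open Metric ContinuousMap

namespace EuclideanSpace

variable {𝕜 ι : Type*} [RCLike 𝕜] [Fintype ι] (p : ι → Prop) [DecidablePred p]

noncomputable def restrictSubtype : EuclideanSpace 𝕜 ι →L[𝕜] EuclideanSpace 𝕜 {i // p i} :=
  LinearMap.toContinuousLinearMap
    { toFun x := WithLp.toLp 2 fun i => x i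
      map_add' x y := by ext; simp
      map_smul' c x := by ext; simp }

noncomputable def extendByZero : EuclideanSpace 𝕜 {i // p i} →ₗᵢ[𝕜] EuclideanSpace 𝕜 ι where
  toFun x := WithLp.toLp 2 fun i => if h : p i then x ⟨i, h⟩ else 0
  map_add' x y := by ext i; by_cases h : p i <;> simp [h]
  map_smul' c x := by ext i; by_cases h : p i <;> simp [h]
  norm_map' x := by
    simp only [LinearMap.coe_mk, AddHom.coe_mk, EuclideanSpace.norm_eq]
    rw [← Fintype.sum_subtype_add_sum_subtype p]
    simp [Subtype.prop, fun i : {i // ¬ p i} => i.2]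

@[simp]
theorem restrictSubtype_apply (x : EuclideanSpace 𝕜 ι) (i : {i // p i}) :
    restrictSubtype p x i = x i := rfl

@[simp]
theorem extendByZero_apply (x : EuclideanSpace 𝕜 {i // p i}) (i : ι) :
    extendByZero p x i = if h : p i then x ⟨i, h⟩ else 0 := rfl

end EuclideanSpace

section Retraction

variable {E F : Type*} [NormedAddCommGroup E] [NormedSpace ℝ E]
  [NormedAddCommGroup F] [NormedSpace ℝ F]

/-- The homotopy normalizes the segment from `x` to `ι (π x)`; it stays away from `0` because `π`
is constant along it. -/
theorem nonempty_homotopyEquiv_sphere_of_retraction (π : E →L[ℝ] F) (ι : F →ₗᵢ[ℝ] E)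
    (hπι : ∀ y, π (ι y) = y) (C : Set E)
    (hC_smul : ∀ x ∈ C, ∀ c : ℝ, 0 < c → c • x ∈ C) (hιC : ∀ y, ι y ∈ C)
    (hC_segment : ∀ x ∈ C, segment ℝ x (ι (π x)) ⊆ C)
    (hπ_ne : ∀ x ∈ C, x ≠ 0 → π x ≠ 0) :
    Nonempty (HomotopyEquiv {x : E | ‖x‖ = 1 ∧ x ∈ C} (sphere (0 : F) 1)) := by
  set S := {x : E | ‖x‖ = 1 ∧ x ∈ C}
  have hπS : ∀ x : S, π x ≠ 0 := fun x => hπ_ne x x.2.2 (norm_ne_zero_iff.mp (by simp [x.2.1]))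
  have h_normalize : ∀ v ∈ C, v ≠ 0 → ‖v‖⁻¹ • v ∈ S := fun v hv hv0 =>
    ⟨norm_smul_inv_norm (𝕜 := ℝ) hv0, hC_smul v hv _ (by positivity)⟩
  let path (t : ℝ) (x : E) : E := (1 - t) • x + t • ι (π x)
  have hπ_path : ∀ t x, π (path t x) = π x := fun t x => by
    simp only [path, map_add, map_smul, hπι, ← add_smul, sub_add_cancel, one_smul]
  have hpath_ne : ∀ t (x : S), path t x ≠ 0 := fun t x h => hπS x (by rw [← hπ_path t, h, map_zero])
  have hpath_mem : ∀ t ∈ Set.Icc (0 : ℝ) 1, ∀ x : S, path t x ∈ C := fun t ht x =>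
    hC_segment x x.2.2 (by rw [segment_eq_image]; exact ⟨t, ht, rfl⟩)
  let r : C(S, sphere (0 : F) 1) :=
    ⟨fun x => ⟨‖π x‖⁻¹ • π x, by simpa using norm_smul_inv_norm (𝕜 := ℝ) (hπS x)⟩, by
      have hc : Continuous fun x : S => π x := π.continuous.comp continuous_subtype_val
      exact ((hc.norm.inv₀ fun x => norm_ne_zero_iff.mpr (hπS x)).smul hc).subtype_mk _⟩
  let i : C(sphere (0 : F) 1, S) :=
    ⟨fun y => ⟨ι y, by simp, hιC y⟩, (ι.continuous.comp continuous_subtype_val).subtype_mk _⟩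
  have hri : r.comp i = ContinuousMap.id _ := by
    ext y : 2
    simp [r, i, hπι]
  let H : Homotopy (ContinuousMap.id S) (i.comp r) :=
    { toFun := fun p => ⟨‖path p.1 p.2‖⁻¹ • path p.1 p.2,
        h_normalize _ (hpath_mem p.1 p.1.2 p.2) (hpath_ne p.1 p.2)⟩
      continuous_toFun := by
        have hc : Continuous fun p : unitInterval × S => path p.1 p.2 := by fun_prop
        exact ((hc.norm.inv₀ fun p => norm_ne_zero_iff.mpr (hpath_ne _ _)).smul hc).subtype_mk _
      map_zero_left := fun x => by ext1; simp [path, x.2.1]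
      map_one_left := fun x => by ext1; simp [path, r, i] }
  exact ⟨⟨r, i, ⟨H.symm⟩, hri ▸ Homotopic.refl _⟩⟩

end Retraction

theorem nonempty_homotopyEquiv_sphere_of_sum_mul_sq {ι : Type*} [Fintype ι] (μ : ι → ℝ) :
    Nonempty (HomotopyEquiv {x : EuclideanSpace ℝ ι | ‖x‖ = 1 ∧ 0 ≤ ∑ i, μ i * x i ^ 2}
      (sphere (0 : EuclideanSpace ℝ {i // 0 ≤ μ i}) 1)) := by
  set π := EuclideanSpace.restrictSubtype (𝕜 := ℝ) fun i => 0 ≤ μ i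
  set ε := EuclideanSpace.extendByZero (𝕜 := ℝ) fun i => 0 ≤ μ i
  have hproj : ∀ x i, ε (π x) i = if 0 ≤ μ i then x i else 0 := fun x i => by
    by_cases h : 0 ≤ μ i <;> simp [π, ε, h]
  refine nonempty_homotopyEquiv_sphere_of_retraction π ε (fun y => by ext i; simp [π, ε, i.2])
    {x | 0 ≤ ∑ i, μ i * x i ^ 2} ?_ ?_ ?_ ?_
  · intro x hx c _
    rw [Set.mem_ofPred_eq] at hx ⊢
    have : ∑ i, μ i * (c • x) i ^ 2 = c ^ 2 * ∑ i, μ i * x i ^ 2 := by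
      rw [Finset.mul_sum]; congr! 1 with i; simp; ring
    rw [this]; positivity
  · intro y
    rw [Set.mem_ofPred_eq]
    refine Finset.sum_nonneg fun i _ => ?_
    by_cases h : 0 ≤ μ i <;> simp [ε, h]; positivity
  · rintro x hx _ ⟨a, b, ha, hb, hab, rfl⟩
    rw [Set.mem_ofPred_eq] at hx ⊢
    refine le_trans hx (Finset.sum_le_sum fun i _ => ?_)
    simp only [PiLp.add_apply, PiLp.smul_apply, hproj, smul_eq_mul]
    split_ifs with h
    · rw [← add_mul, hab, one_mul]
    · have ha1 : a ^ 2 ≤ 1 := by nlinarith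
      rw [mul_zero, add_zero, mul_pow]
      exact mul_le_mul_of_nonpos_left (mul_le_of_le_one_left (sq_nonneg _) ha1) (not_le.mp h).le
  · intro x hx hx0 hπ
    rw [Set.mem_ofPred_eq] at hx
    have hpos : ∀ i, 0 ≤ μ i → x i = 0 := fun i h => by
      simpa [π] using congrArg (fun v : EuclideanSpace ℝ _ => v ⟨i, h⟩) hπ
    have hterm : ∀ i, μ i * x i ^ 2 ≤ 0 := fun i => by
      by_cases h : 0 ≤ μ i
      · simp [hpos i h]
      · exact mul_nonpos_of_nonpos_of_nonneg (not_le.mp h).le (sq_nonneg _)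
    have hzero := (Finset.sum_eq_zero_iff_of_nonpos fun i _ => hterm i).mp
      (le_antisymm (Finset.sum_nonpos fun i _ => hterm i) hx)
    refine hx0 (PiLp.ext fun i => ?_)
    by_cases h : 0 ≤ μ i
    · exact hpos i h
    · simpa [(not_le.mp h).ne] using hzero i (Finset.mem_univ i)

theorem Matrix.IsHermitian.sum_sum_mul_mul_eq_sum_eigenvalues_mul_sq {n : Type*} [Fintype n]
    [DecidableEq n] {M : Matrix n n ℝ} (hM : M.IsHermitian) (y : EuclideanSpace ℝ n) :
    ∑ a, ∑ b, M a b * y a * y b = ∑ i, hM.eigenvalues i * (hM.eigenvectorBasis.repr y i) ^ 2 := by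
  set v := hM.eigenvectorBasis
  have hT : (toEuclideanLin M).IsSymmetric := isSymmetric_toEuclideanLin_iff.mpr hM
  have hv : ∀ i, toEuclideanLin M (v i) = hM.eigenvalues i • v i := fun i => by
    ext1 k; simpa [Matrix.toLpLin_apply] using congrFun (hM.mulVec_eigenvectorBasis i) k
  calc ∑ a, ∑ b, M a b * y a * y b = inner ℝ y (toEuclideanLin M y) := by
        simp [Matrix.toLpLin_apply, PiLp.inner_apply, mulVec, dotProduct, Finset.sum_mul,
          mul_right_comm]
    _ = ∑ i, inner ℝ y (v i) * inner ℝ (toEuclideanLin M (v i)) y := by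
        rw [← v.sum_inner_mul_inner]; simp_rw [hT (v _) y]
    _ = _ := by
        simp_rw [hv, inner_smul_left, v.repr_apply_apply, real_inner_comm (v _) y]
        exact Finset.sum_congr rfl fun i _ => by simp; ring

/-- Let `Q(y) = ⟨M y, y⟩` be a real quadratic form on `ℝ^(ℓ+1)` given by a
symmetric matrix `M` whose index (the number of negative eigenvalues, counted with
multiplicity) is `j ≤ ℓ`.  Then `{y ∈ Sᶫ : Q(y) ≥ 0}` is homotopy equivalent to a sphere of
dimension `ℓ - j`. -/
theorem nonneg_set_of_quadratic_form_on_sphere_htpyEquiv_sphere (ℓ j : ℕ) (hj : j ≤ ℓ)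
    (M : Matrix (Fin (ℓ + 1)) (Fin (ℓ + 1)) ℝ) (hM : M.IsHermitian)
    (hindex : Fintype.card {i // hM.eigenvalues i < 0} = j)
    (Q : EuclideanSpace ℝ (Fin (ℓ + 1)) → ℝ)
    (hQ : ∀ y, Q y = ∑ a, ∑ b, M a b * y a * y b) :
    Nonempty
      (ContinuousMap.HomotopyEquiv
        {y : EuclideanSpace ℝ (Fin (ℓ + 1)) | ‖y‖ = 1 ∧ 0 ≤ Q y}
        (Metric.sphere (0 : EuclideanSpace ℝ (Fin (ℓ - j + 1))) 1)) := by
  set μ := hM.eigenvalues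
  have hcard : Fintype.card {i // 0 ≤ μ i} = Fintype.card (Fin (ℓ - j + 1)) := by
    simp only [← not_lt, Fintype.card_subtype_compl, hindex, Fintype.card_fin]
    omega
  let toEigenCoords : {y : EuclideanSpace ℝ (Fin (ℓ + 1)) | ‖y‖ = 1 ∧ 0 ≤ Q y} ≃ₜ
      {x : EuclideanSpace ℝ (Fin (ℓ + 1)) | ‖x‖ = 1 ∧ 0 ≤ ∑ i, μ i * x i ^ 2} :=
    hM.eigenvectorBasis.repr.toHomeomorph.subtype fun y => by
      simp [hQ, hM.sum_sum_mul_mul_eq_sum_eigenvalues_mul_sq, μ]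
  let reindex : sphere (0 : EuclideanSpace ℝ {i // 0 ≤ μ i}) 1 ≃ₜ
      sphere (0 : EuclideanSpace ℝ (Fin (ℓ - j + 1))) 1 :=
    (LinearIsometryEquiv.piLpCongrLeft 2 ℝ ℝ (Fintype.equivOfCardEq hcard)).toHomeomorph.subtype
      fun x => by simp
  obtain ⟨h⟩ := nonempty_homotopyEquiv_sphere_of_sum_mul_sq μ
  exact ⟨(toEigenCoords.toHomotopyEquiv.trans h).trans reindex.toHomotopyEquiv⟩
end

section
/- Let Q be a real quadratic form on R^(ℓ+1) with index j, and let L⁺ be the sum of the eigenspaces of its symmetric matrix corresponding to nonnegative eigenvalues. Then the unit sphere of L⁺, i.e. L⁺ ∩ S^ℓ, is a deformation retract of {y ∈ S^ℓ : Q(y) ≥ 0}. -/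
/-!
Let `K = L⁺` and `P` the orthogonal projection onto `K`. By the spectral theorem `Q` is
positive semidefinite on `K`, negative definite on `Kᗮ`, and `Q(u + v) = Q u + Q v` for
`u ∈ K`, `v ∈ Kᗮ`. Hence a point `x` of `S` has `P x ≠ 0`, and along the segment
`P x + t (x - P x)`, `0 ≤ t ≤ 1`, the value `Q = Q(P x) + t² Q(x - P x) ≥ Q x ≥ 0` stays
nonnegative and the point stays nonzero. Radially projecting this segment to the sphere
deforms the identity of `S` into the retraction `x ↦ P x / ‖P x‖`.
-/

open scoped RealInnerProductSpace unitInterval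
open Module.End (eigenspace mem_eigenspace_iff)

namespace LinearMap

variable {E : Type*} [NormedAddCommGroup E] [InnerProductSpace ℝ E]

def nonnegSpectralSubspace (T : E →ₗ[ℝ] E) : Submodule ℝ E :=
  ⨆ μ : {μ : ℝ // 0 ≤ μ}, eigenspace T μ

variable {T : E →ₗ[ℝ] E}

theorem eigenspace_le_nonnegSpectralSubspace {μ : ℝ} (hμ : 0 ≤ μ) :
    eigenspace T μ ≤ T.nonnegSpectralSubspace :=
  le_iSup (fun ν : {μ : ℝ // 0 ≤ μ} => eigenspace T ν) ⟨μ, hμ⟩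

theorem apply_mem_nonnegSpectralSubspace {x : E} (hx : x ∈ T.nonnegSpectralSubspace) :
    T x ∈ T.nonnegSpectralSubspace := by
  suffices T.nonnegSpectralSubspace ≤ T.nonnegSpectralSubspace.comap T from this hx
  refine iSup_le fun μ y hy => ?_
  rw [Submodule.mem_comap, mem_eigenspace_iff.1 hy]
  exact Submodule.smul_mem _ _ (eigenspace_le_nonnegSpectralSubspace μ.2 hy)

namespace IsSymmetric

theorem eigenspace_le_orthogonal_nonnegSpectralSubspace (hT : T.IsSymmetric) {μ : ℝ}
    (hμ : μ < 0) : eigenspace T μ ≤ T.nonnegSpectralSubspaceᗮ := by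
  rw [← Submodule.isOrtho_iff_le, nonnegSpectralSubspace, Submodule.isOrtho_iSup_right]
  exact fun ν => hT.orthogonalFamily_eigenspaces.isOrtho (hμ.trans_le ν.2).ne

theorem inner_map_add_self_of_mem_orthogonal (hT : T.IsSymmetric) {u v : E}
    (hu : u ∈ T.nonnegSpectralSubspace) (hv : v ∈ T.nonnegSpectralSubspaceᗮ) :
    ⟪T (u + v), u + v⟫ = ⟪T u, u⟫ + ⟪T v, v⟫ := by
  have hTu := apply_mem_nonnegSpectralSubspace hu
  have h₁ : ⟪T u, v⟫ = 0 := Submodule.inner_right_of_mem_orthogonal hTu hv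
  have h₂ : ⟪T v, u⟫ = 0 := by rw [hT, Submodule.inner_left_of_mem_orthogonal hTu hv]
  simp only [map_add, inner_add_left, inner_add_right, h₁, h₂]
  ring

variable [FiniteDimensional ℝ E]

theorem inner_map_self_eq_sum_eigenvalues (hT : T.IsSymmetric) {n : ℕ}
    (hn : Module.finrank ℝ E = n) (x : E) :
    ⟪T x, x⟫ = ∑ i, hT.eigenvalues hn i * ⟪hT.eigenvectorBasis hn i, x⟫ ^ 2 := by
  rw [← (hT.eigenvectorBasis hn).sum_inner_mul_inner (T x) x]
  refine Finset.sum_congr rfl fun i _ => ?_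
  rw [hT, apply_eigenvectorBasis, real_inner_smul_right, real_inner_comm x]
  simp only [RCLike.ofReal_real_eq_id, _root_.id]
  ring

theorem inner_map_self_nonneg_of_mem (hT : T.IsSymmetric) {x : E}
    (hx : x ∈ T.nonnegSpectralSubspace) : 0 ≤ ⟪T x, x⟫ := by
  rw [hT.inner_map_self_eq_sum_eigenvalues rfl]
  refine Finset.sum_nonneg fun i _ => ?_
  rcases lt_or_ge (hT.eigenvalues rfl i) 0 with hμ | hμ
  · have hb := hT.eigenspace_le_orthogonal_nonnegSpectralSubspace hμ
      (mem_eigenspace_iff.2 (hT.apply_eigenvectorBasis rfl i))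
    simp [Submodule.inner_left_of_mem_orthogonal hx hb]
  · positivity

theorem inner_map_self_neg_of_mem_orthogonal (hT : T.IsSymmetric) {x : E}
    (hx : x ∈ T.nonnegSpectralSubspaceᗮ) (hx₀ : x ≠ 0) : ⟪T x, x⟫ < 0 := by
  set b := hT.eigenvectorBasis rfl
  set μ := hT.eigenvalues rfl
  have hzero : ∀ i, 0 ≤ μ i → ⟪b i, x⟫ = 0 := fun i hμ =>
    Submodule.inner_right_of_mem_orthogonal (eigenspace_le_nonnegSpectralSubspace hμ
      (mem_eigenspace_iff.2 (hT.apply_eigenvectorBasis rfl i))) hx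
  have hterm : ∀ i, μ i * ⟪b i, x⟫ ^ 2 ≤ 0 := fun i => by
    rcases lt_or_ge (μ i) 0 with hμ | hμ
    · exact mul_nonpos_of_nonpos_of_nonneg hμ.le (sq_nonneg _)
    · simp [hzero i hμ]
  obtain ⟨i, hi⟩ : ∃ i, ⟪b i, x⟫ ≠ 0 := by
    by_contra! h
    exact hx₀ (by simpa [h] using (b.sum_repr' x).symm)
  have hμi : μ i < 0 := lt_of_not_ge fun hμ => hi (hzero i hμ)
  rw [hT.inner_map_self_eq_sum_eigenvalues rfl]
  calc ∑ j, μ j * ⟪b j, x⟫ ^ 2 < ∑ _j, (0 : ℝ) :=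
        Finset.sum_lt_sum (fun j _ => hterm j) ⟨i, Finset.mem_univ i,
          mul_neg_of_neg_of_pos hμi (by positivity)⟩
    _ = 0 := Finset.sum_const_zero

end IsSymmetric

end LinearMap

section SphereRetraction

variable {E : Type*} [NormedAddCommGroup E] [InnerProductSpace ℝ E]

def nonnegSphere (q : E → ℝ) : Set E := {y | ‖y‖ = 1 ∧ 0 ≤ q y}

theorem inv_norm_smul_mem_nonnegSphere {q : E → ℝ}
    (hsmul : ∀ (c : ℝ) (x : E), q (c • x) = c ^ 2 * q x) {y : E} (hy : y ≠ 0) (hq : 0 ≤ q y) :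
    ‖y‖⁻¹ • y ∈ nonnegSphere q :=
  ⟨by rw [norm_smul, norm_inv, norm_norm, inv_mul_cancel₀ (norm_ne_zero_iff.2 hy)],
    by rw [hsmul]; positivity⟩

variable (K : Submodule ℝ E) [K.HasOrthogonalProjection] {q : E → ℝ}

theorem starProjection_ne_zero_of_mem_nonnegSphere
    (hneg : ∀ v ∈ Kᗮ, v ≠ 0 → q v < 0) {x : E} (hx : x ∈ nonnegSphere q) :
    K.starProjection x ≠ 0 := by
  intro hPx
  have hx₀ : x ≠ 0 := by rintro rfl; simpa using hx.1
  have hxK : x ∈ Kᗮ := by simpa [hPx] using K.sub_starProjection_mem_orthogonal x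
  exact (hneg x hxK hx₀).not_ge hx.2

theorem lineMap_starProjection_ne_zero {x : E} (hx : K.starProjection x ≠ 0) (t : ℝ) :
    AffineMap.lineMap (K.starProjection x) x t ≠ 0 := by
  intro h
  rw [AffineMap.lineMap_apply_module', add_eq_zero_iff_neg_eq] at h
  have hK : -(t • (x - K.starProjection x)) ∈ Kᗮ :=
    Kᗮ.neg_mem (Kᗮ.smul_mem t (K.sub_starProjection_mem_orthogonal x))
  rw [h] at hK
  exact hx ((Submodule.mem_bot ℝ).1
    (K.inf_orthogonal_eq_bot ▸ ⟨K.starProjection_apply_mem x, hK⟩))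

theorem le_apply_lineMap_starProjection (hsmul : ∀ (c : ℝ) (x : E), q (c • x) = c ^ 2 * q x)
    (hadd : ∀ u ∈ K, ∀ v ∈ Kᗮ, q (u + v) = q u + q v) (hneg : ∀ v ∈ Kᗮ, v ≠ 0 → q v < 0)
    (x : E) {t : ℝ} (ht : t ^ 2 ≤ 1) :
    q x ≤ q (AffineMap.lineMap (K.starProjection x) x t) := by
  set u := K.starProjection x
  set v := x - u
  have hu : u ∈ K := K.starProjection_apply_mem x
  have hv : v ∈ Kᗮ := K.sub_starProjection_mem_orthogonal x
  have hqv : q v ≤ 0 := by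
    rcases eq_or_ne v 0 with h | h
    · simpa [h] using (hsmul 0 0).le
    · exact (hneg v hv h).le
  calc q x = q u + q v := by rw [← hadd u hu v hv, add_sub_cancel]
    _ ≤ q u + t ^ 2 * q v := by nlinarith
    _ = q (AffineMap.lineMap u x t) := by
      rw [AffineMap.lineMap_apply_module', add_comm (t • _), hadd u hu _ (Kᗮ.smul_mem t hv),
        hsmul]

theorem exists_retraction_nonnegSphere_homotopic_id
    (hsmul : ∀ (c : ℝ) (x : E), q (c • x) = c ^ 2 * q x)
    (hadd : ∀ u ∈ K, ∀ v ∈ Kᗮ, q (u + v) = q u + q v) (hneg : ∀ v ∈ Kᗮ, v ≠ 0 → q v < 0) :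
    ∃ r : C(nonnegSphere q, nonnegSphere q),
      (∀ x : nonnegSphere q, (x : E) ∈ K → r x = x) ∧ (∀ x : nonnegSphere q, (r x : E) ∈ K) ∧
      Nonempty (r.Homotopy (ContinuousMap.id _)) := by
  let g (p : I × nonnegSphere q) : E := AffineMap.lineMap (K.starProjection p.2) p.2 (p.1 : ℝ)
  have hg₀ (p : I × nonnegSphere q) : g p ≠ 0 :=
    lineMap_starProjection_ne_zero K (starProjection_ne_zero_of_mem_nonnegSphere K hneg p.2.2) _
  have hgq (p : I × nonnegSphere q) : 0 ≤ q (g p) :=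
    p.2.2.2.trans (le_apply_lineMap_starProjection K hsmul hadd hneg p.2 (by
      nlinarith [p.1.2.1, p.1.2.2]))
  have hg : Continuous g := by fun_prop
  let H : C(I × nonnegSphere q, nonnegSphere q) :=
    ⟨fun p => ⟨‖g p‖⁻¹ • g p, inv_norm_smul_mem_nonnegSphere hsmul (hg₀ p) (hgq p)⟩,
      ((hg.norm.inv₀ fun p => norm_ne_zero_iff.2 (hg₀ p)).smul hg).subtype_mk _⟩
  have hunit (x : nonnegSphere q) : ‖(x : E)‖⁻¹ • (x : E) = x := by simp [x.2.1]
  refine ⟨H.curry 0, fun x hx => ?_, fun x => ?_, ⟨⟨H, fun _ => rfl, fun x => ?_⟩⟩⟩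
  · apply Subtype.ext
    simpa [H, g, K.starProjection_eq_self_iff.2 hx] using hunit x
  · simpa [H, g] using K.smul_mem _ (K.starProjection_apply_mem x)
  · exact Subtype.ext (by simpa [H, g] using hunit x)

end SphereRetraction

theorem Matrix.inner_toEuclideanLin_self {n : Type*} [Fintype n] [DecidableEq n]
    (M : Matrix n n ℝ) (y : EuclideanSpace ℝ n) :
    ⟪M.toEuclideanLin y, y⟫ = ∑ a, ∑ b, M a b * y a * y b := by
  simp [PiLp.inner_apply, Matrix.mulVec, dotProduct, Finset.mul_sum, mul_assoc, mul_left_comm]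

/-- Let `Q(y) = ⟨M y, y⟩` be a quadratic form on `ℝ^(ℓ+1)` given by a
symmetric matrix `M`, and let `L⁺` be the sum of the eigenspaces of `M` corresponding to
nonnegative eigenvalues.  Then the unit sphere `L⁺ ∩ Sᶫ` of `L⁺` is a deformation retract of
`S := {y ∈ Sᶫ : Q(y) ≥ 0}`: there is a retraction of `S` onto `L⁺ ∩ Sᶫ` fixing `L⁺ ∩ Sᶫ`
pointwise and homotopic to the identity. -/
theorem unit_sphere_of_nonneg_eigenspaces_deformation_retract (ℓ : ℕ)
    (M : Matrix (Fin (ℓ + 1)) (Fin (ℓ + 1)) ℝ) (hM : M.IsHermitian)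
    (Q : EuclideanSpace ℝ (Fin (ℓ + 1)) → ℝ)
    (hQ : ∀ y, Q y = ∑ a, ∑ b, M a b * y a * y b)
    (Lplus : Submodule ℝ (EuclideanSpace ℝ (Fin (ℓ + 1))))
    (hL : Lplus = ⨆ μ : {μ : ℝ // 0 ≤ μ},
      Module.End.eigenspace (Matrix.toEuclideanLin M) (μ : ℝ))
    (S : Set (EuclideanSpace ℝ (Fin (ℓ + 1))))
    (hS : S = {y | ‖y‖ = 1 ∧ 0 ≤ Q y}) :
    (∀ y ∈ Lplus, ‖y‖ = 1 → y ∈ S) ∧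
    ∃ r : C(S, S),
      (∀ x : S, (x : EuclideanSpace ℝ (Fin (ℓ + 1))) ∈ Lplus → r x = x) ∧
      (∀ x : S, (r x : EuclideanSpace ℝ (Fin (ℓ + 1))) ∈ Lplus) ∧
      Nonempty (r.Homotopy (ContinuousMap.id S)) := by
  set T := Matrix.toEuclideanLin M
  have hT : T.IsSymmetric := Matrix.isSymmetric_toEuclideanLin_iff.2 hM
  obtain rfl : Q = fun y => ⟪T y, y⟫ :=
    funext fun y => (hQ y).trans (M.inner_toEuclideanLin_self y).symm
  obtain rfl : Lplus = T.nonnegSpectralSubspace := hL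
  obtain rfl : S = nonnegSphere fun y => ⟪T y, y⟫ := hS
  refine ⟨fun y hy hy₁ => ⟨hy₁, hT.inner_map_self_nonneg_of_mem hy⟩, ?_⟩
  refine exists_retraction_nonnegSphere_homotopic_id T.nonnegSpectralSubspace
    (fun c x => ?_) (fun u hu v hv => hT.inner_map_add_self_of_mem_orthogonal hu hv)
    (fun v hv hv₀ => hT.inner_map_self_neg_of_mem_orthogonal hv hv₀)
  rw [map_smul, real_inner_smul_left, real_inner_smul_right]
  ring
end

section
/- Let S ⊆ R^(ℓ+1) be the semi-algebraic set defined by (Σ_{i=1}^ℓ Π_{j=0}^{d−1}(Y_i − j)² = 0) ∧ (0 ≤ X ≤ Y_1 + d·Y_2 + d²·Y_3 + ... + d^{ℓ−1}·Y_ℓ), and let π : R^{ℓ+1} → R be projection onto the X-coordinate. Then for each x ∈ {0, 1, ..., d^ℓ − 1}, the fiber S_x = π⁻¹(x) ∩ S is a finite set of cardinality d^ℓ − x; in particular the fibers over distinct such x have different homotopy types. -/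
open scoped BigOperators

lemma path_eq_of_totally_disconnected {X : Type*} [TopologicalSpace X]
    [TotallyDisconnectedSpace X] {a b : X} (γ : Path a b) : a = b :=
  (isPreconnected_range γ.continuous_toFun).subsingleton ⟨0, γ.source⟩ ⟨1, γ.target⟩

lemma discrete_homotopy_card {X Y : Type*} [TopologicalSpace X] [TopologicalSpace Y]
    [T1Space X] [T1Space Y] [Finite X] [Finite Y]
    (e : ContinuousMap.HomotopyEquiv X Y) : Nat.card X = Nat.card Y := by
  obtain ⟨H⟩ := e.left_inv
  obtain ⟨H'⟩ := e.right_inv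
  have hl : ∀ a, e.invFun (e.toFun a) = a := fun a =>
    path_eq_of_totally_disconnected (H.evalAt a)
  have hr : ∀ b, e.toFun (e.invFun b) = b := fun b =>
    path_eq_of_totally_disconnected (H'.evalAt b)
  exact Nat.card_congr ⟨e.toFun, e.invFun, hl, hr⟩

/-- Let `S ⊆ ℝ^(ℓ+1)` (with coordinates `Y₁, …, Y_ℓ, X`) be defined by
`∑ᵢ ∏_{j=0}^{d-1} (Yᵢ - j)² = 0  ∧  0 ≤ X ≤ Y₁ + d Y₂ + d² Y₃ + ⋯ + d^(ℓ-1) Y_ℓ`,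
and let `π` be the projection onto the `X`-coordinate.  Then for each `x ∈ {0, …, dᶫ - 1}`,
the fiber `S_x = π⁻¹(x) ∩ S` is a finite set of cardinality `dᶫ - x`; in particular the fibers
over distinct such `x` have different homotopy types. -/
theorem fibers_of_example_have_distinct_homotopy_types (ℓ d : ℕ) (hd : 1 ≤ d)
    (S : Set ((Fin ℓ → ℝ) × ℝ))
    (hS : S = {p | (∑ i, ∏ j ∈ Finset.range d, (p.1 i - (j : ℝ)) ^ 2) = 0 ∧
      0 ≤ p.2 ∧ p.2 ≤ ∑ i : Fin ℓ, (d : ℝ) ^ (i : ℕ) * p.1 i})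
    (fib : ℕ → Set (Fin ℓ → ℝ))
    (hfib : ∀ x, fib x = {y | (y, (x : ℝ)) ∈ S}) :
    (∀ x : ℕ, x < d ^ ℓ → (fib x).Finite ∧ (fib x).ncard = d ^ ℓ - x) ∧
    (∀ x x' : ℕ, x < d ^ ℓ → x' < d ^ ℓ → x ≠ x' →
      ¬ Nonempty (ContinuousMap.HomotopyEquiv (fib x) (fib x'))) := by
  have key : ∀ x : ℕ, x < d ^ ℓ → (fib x).Finite ∧ (fib x).ncard = d ^ ℓ - x := by
    intro x hx
    set F : (Fin ℓ → Fin d) → (Fin ℓ → ℝ) := fun g i => ((g i : ℕ) : ℝ) with hF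
    have hinj : Function.Injective F := by
      intro a b h
      funext i
      have := congrFun h i
      simp only [hF] at this
      exact Fin.ext (by exact_mod_cast this)
    have hfx : fib x = F '' {g : Fin ℓ → Fin d | x ≤ ∑ i : Fin ℓ, d ^ (i : ℕ) * (g i : ℕ)} := by
      rw [hfib, hS]
      ext y
      simp only [Set.mem_setOf_eq, Set.mem_image]
      constructor
      · rintro ⟨h1, _h2, h3⟩
        have h4 : ∀ i, ∃ j ∈ Finset.range d, y i = j := by
          intro i
          have hnn : ∀ i ∈ Finset.univ, (0:ℝ) ≤ ∏ j ∈ Finset.range d, (y i - (j:ℝ)) ^ 2 :=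
            fun i _ => Finset.prod_nonneg fun j _ => sq_nonneg _
          have hterm : ∏ j ∈ Finset.range d, (y i - (j:ℝ)) ^ 2 = 0 :=
            (Finset.sum_eq_zero_iff_of_nonneg hnn).mp h1 i (Finset.mem_univ i)
          obtain ⟨j, hj, hj0⟩ := Finset.prod_eq_zero_iff.mp hterm
          exact ⟨j, hj, by have := sq_eq_zero_iff.mp hj0; linarith⟩
        choose g hg1 hg2 using h4
        refine ⟨fun i => ⟨g i, Finset.mem_range.mp (hg1 i)⟩, ?_, ?_⟩
        · have h3' : (x : ℝ) ≤ ∑ i : Fin ℓ, (d : ℝ) ^ (i : ℕ) * ((g i : ℕ) : ℝ) := by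
            refine le_trans h3 (le_of_eq (Finset.sum_congr rfl fun i _ => ?_))
            rw [hg2 i]
          have h5 : (x : ℝ) ≤ ((∑ i : Fin ℓ, d ^ (i : ℕ) * g i : ℕ) : ℝ) := by
            push_cast; exact h3'
          exact_mod_cast h5
        · funext i; simp [hF, hg2 i]
      · rintro ⟨g, hg, rfl⟩
        refine ⟨?_, by positivity, ?_⟩
        · apply Finset.sum_eq_zero
          intro i _
          apply Finset.prod_eq_zero (Finset.mem_range.mpr (g i).isLt)
          simp [hF]
        · have : ((x:ℕ):ℝ) ≤ ((∑ i : Fin ℓ, d ^ (i : ℕ) * (g i : ℕ) : ℕ) : ℝ) := Nat.cast_le.mpr hg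
          push_cast at this
          simpa [hF] using this
    have hfin : (fib x).Finite := by
      rw [hfx]; exact (Set.toFinite _).image _
    refine ⟨hfin, ?_⟩
    rw [hfx, Set.ncard_image_of_injective _ hinj, ← Nat.card_coe_set_eq]
    have e2 : {g : Fin ℓ → Fin d // x ≤ ∑ i : Fin ℓ, d ^ (i : ℕ) * (g i : ℕ)} ≃
        {k : Fin (d ^ ℓ) // x ≤ (k : ℕ)} :=
      finFunctionFinEquiv.subtypeEquiv (fun g => by
        rw [finFunctionFinEquiv_apply]
        simp [mul_comm])
    have : Nat.card ↥{g : Fin ℓ → Fin d | x ≤ ∑ i : Fin ℓ, d ^ (i : ℕ) * (g i : ℕ)} =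
        Nat.card {k : Fin (d ^ ℓ) // x ≤ (k : ℕ)} := Nat.card_congr e2
    rw [this, Nat.card_eq_fintype_card, Fintype.card_subtype]
    have hfe : Finset.filter (fun k : Fin (d ^ ℓ) => x ≤ (k : ℕ)) Finset.univ =
        Finset.Ici (⟨x, hx⟩ : Fin (d ^ ℓ)) := by
      ext k; simp [Fin.le_def]
    rw [hfe, Fin.card_Ici]
  refine ⟨key, ?_⟩
  rintro x x' hx hx' hne ⟨e⟩
  have h1 := key x hx
  have h2 := key x' hx'
  haveI : Finite (fib x) := h1.1.to_subtype
  haveI : Finite (fib x') := h2.1.to_subtype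
  have hc := discrete_homotopy_card e
  rw [Nat.card_coe_set_eq, Nat.card_coe_set_eq, h1.2, h2.2] at hc
  omega
end

section
/- Let S ⊆ R^(ℓ+1) be defined by Y_i(Y_i − 1) = 0 for 1 ≤ i ≤ m (with m ≤ ℓ) together with 0 ≤ X ≤ Y_1 + 2Y_2 + ... + 2^{m−1}Y_m, and let π be projection onto X. Then for x ∈ {0, 1, ..., 2^{m−1}}, the fibers S_x have pairwise different numbers of connected components; hence there are at least 2^{m−1} + 1 distinct homotopy types among the fibers, even though S is defined by m+2 polynomials of degree at most 2 in the Y variables. -/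
/-!
The fiber over `x` consists of the `y` whose first `m` coordinates form a `0/1` vector of binary
value at least `x`, the remaining coordinates being free. Restricting to the first `m` coordinates
is a surjective linear map, so the fiber is the preimage of a finite set under it, and its pieces
over the single points are nonempty affine subspaces; hence the connected components correspond
to the `2 ^ m - x` admissible binary vectors. These counts are distinct for `x ≤ 2 ^ (m - 1)`,
and homotopy equivalent spaces have the same number of connected components.
-/

open Function

theorem Fin.sum_filter_val_lt {M : Type*} [AddCommMonoid M] {m n : ℕ} (h : m ≤ n)
    (f : Fin n → M) :
    ∑ i ∈ Finset.univ.filter (fun i : Fin n => (i : ℕ) < m), f i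
      = ∑ i : Fin m, f (Fin.castLE h i) := by
  have : Finset.univ.filter (fun i : Fin n => (i : ℕ) < m)
      = Finset.univ.map (Fin.castLEEmb h) := by
    ext i
    simp only [Finset.mem_filter, Finset.mem_univ, true_and, Finset.mem_map, Fin.castLEEmb_apply]
    exact ⟨fun hi => ⟨⟨i, hi⟩, rfl⟩, by rintro ⟨j, rfl⟩; exact j.2⟩
  rw [this, Finset.sum_map]
  rfl

theorem Fin.card_filter_le_val (n x : ℕ) : Finset.card {k : Fin n | x ≤ (k : ℕ)} = n - x := by
  have h := Finset.card_filter_add_card_filter_not (s := Finset.univ)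
    (fun k : Fin n => (k : ℕ) < x)
  simp only [not_lt, Fin.card_filter_val_lt, Finset.card_univ, Fintype.card_fin] at h
  omega

section
variable {X Y : Type*} [TopologicalSpace X] [TopologicalSpace Y]

theorem ContinuousMap.Homotopic.connectedComponentsMk_eq {f g : C(X, Y)} (H : f.Homotopic g)
    (x : X) : ConnectedComponents.mk (f x) = ConnectedComponents.mk (g x) :=
  ConnectedComponents.coe_eq_coe'.2 <|
    pathComponent_subset_component _ (Joined.symm ⟨H.some.evalAt x⟩)

theorem ContinuousMap.HomotopyEquiv.natCard_connectedComponents_eq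
    (h : ContinuousMap.HomotopyEquiv X Y) :
    Nat.card (ConnectedComponents X) = Nat.card (ConnectedComponents Y) := by
  refine Nat.card_congr ⟨h.toFun.continuous.connectedComponentsMap,
    h.invFun.continuous.connectedComponentsMap, ?_, ?_⟩
  · refine ConnectedComponents.surjective_coe.forall.2 fun x => ?_
    simpa using h.left_inv.connectedComponentsMk_eq x
  · refine ConnectedComponents.surjective_coe.forall.2 fun y => ?_
    simpa using h.right_inv.connectedComponentsMk_eq y

theorem Continuous.natCard_connectedComponents_eq_of_isPreconnected_fiber
    [TotallyDisconnectedSpace Y] {f : X → Y} (hf : Continuous f) (hsurj : Surjective f)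
    (hfib : ∀ y, IsPreconnected (f ⁻¹' {y})) :
    Nat.card (ConnectedComponents X) = Nat.card Y := by
  refine Nat.card_eq_of_bijective hf.connectedComponentsLift ⟨fun a b hab => ?_, fun y => ?_⟩
  · obtain ⟨x, rfl⟩ := ConnectedComponents.surjective_coe a
    obtain ⟨x', rfl⟩ := ConnectedComponents.surjective_coe b
    simp only [Continuous.connectedComponentsLift_apply_coe] at hab
    exact ConnectedComponents.coe_eq_coe'.2 <| (hfib (f x')).subset_connectedComponent rfl hab
  · obtain ⟨x, rfl⟩ := hsurj y
    exact ⟨x, rfl⟩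

theorem Continuous.natCard_connectedComponents_preimage [T1Space Y] {f : X → Y}
    (hf : Continuous f) {s : Set Y} (hs : s.Finite) (hsurj : s ⊆ Set.range f)
    (hfib : ∀ y ∈ s, IsPreconnected (f ⁻¹' {y})) :
    Nat.card (ConnectedComponents (f ⁻¹' s)) = Nat.card s := by
  -- a finite subspace of a T₁ space is discrete, so `s` is totally disconnected
  have := hs.to_subtype
  refine (hf.restrictPreimage (s := s)).natCard_connectedComponents_eq_of_isPreconnected_fiber
    ?_ ?_
  · rintro ⟨y, hy⟩
    obtain ⟨x, rfl⟩ := hsurj hy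
    exact ⟨⟨x, hy⟩, rfl⟩
  · rintro ⟨y, hy⟩
    rw [← Topology.IsInducing.subtypeVal.isPreconnected_image]
    convert hfib y hy
    ext x
    simp only [Set.restrictPreimage, Set.mem_image, Set.mem_preimage, Set.mem_singleton_iff,
      Subtype.ext_iff, Set.MapsTo.val_restrict_apply, Subtype.exists, exists_and_left, exists_prop,
      exists_eq_right_right, and_iff_left_iff_imp]
    rintro rfl
    exact hy
end

theorem ContinuousLinearMap.natCard_connectedComponents_preimage {E F : Type*}
    [AddCommGroup E] [Module ℝ E] [TopologicalSpace E] [ContinuousAdd E] [ContinuousSMul ℝ E]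
    [AddCommGroup F] [Module ℝ F] [TopologicalSpace F] [T1Space F] (f : E →L[ℝ] F)
    (hf : Surjective f) {s : Set F} (hs : s.Finite) :
    Nat.card (ConnectedComponents (f ⁻¹' s)) = Nat.card s :=
  f.continuous.natCard_connectedComponents_preimage hs (fun y _ => hf y) fun y _ =>
    ((convex_singleton y).linear_preimage f.toLinearMap).isPreconnected

theorem cast_finFunctionFinEquiv_two {m : ℕ} (b : Fin m → Fin 2) :
    ((finFunctionFinEquiv b : ℕ) : ℝ) = ∑ i : Fin m, 2 ^ (i : ℕ) * (b i : ℝ) := by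
  simp [mul_comm]

def binaryExpansionsAtLeast (m : ℕ) (x : ℝ) : Set (Fin m → ℝ) :=
  {v | (∀ i, v i * (v i - 1) = 0) ∧ x ≤ ∑ i : Fin m, 2 ^ (i : ℕ) * v i}

theorem binaryExpansionsAtLeast_eq_image (m x : ℕ) :
    binaryExpansionsAtLeast m x =
      (fun b i => ((b i : ℕ) : ℝ)) ''
        {b : Fin m → Fin 2 | x ≤ (finFunctionFinEquiv b : ℕ)} := by
  ext v
  simp only [binaryExpansionsAtLeast, Set.mem_ofPred_eq, Set.mem_image]
  constructor
  · rintro ⟨hbin, hx⟩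
    have hv : ∀ i, v i = 0 ∨ v i = 1 := fun i => (mul_eq_zero.1 (hbin i)).imp id sub_eq_zero.1
    have : (fun i => (((if v i = 1 then 1 else 0 : Fin 2) : ℕ) : ℝ)) = v := by
      ext i
      rcases hv i with h | h <;> simp [h]
    refine ⟨fun i => if v i = 1 then 1 else 0, ?_, this⟩
    rw [← this, ← cast_finFunctionFinEquiv_two] at hx
    exact_mod_cast hx
  · rintro ⟨b, hb, rfl⟩
    refine ⟨fun i => ?_, ?_⟩
    · rcases Fin.exists_fin_two.1 ⟨b i, rfl⟩ with h | h <;> simp [h]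
    · rw [← cast_finFunctionFinEquiv_two]
      exact_mod_cast hb

theorem finite_binaryExpansionsAtLeast (m x : ℕ) : (binaryExpansionsAtLeast m x).Finite := by
  rw [binaryExpansionsAtLeast_eq_image]
  exact Set.toFinite _

theorem natCard_binaryExpansionsAtLeast (m x : ℕ) :
    Nat.card (binaryExpansionsAtLeast m x) = 2 ^ m - x := by
  rw [binaryExpansionsAtLeast_eq_image, Nat.card_image_of_injective]
  · rw [Set.coe_ofPred, Nat.card_congr (finFunctionFinEquiv.subtypeEquiv
        (q := fun k : Fin (2 ^ m) => x ≤ (k : ℕ)) fun _ => Iff.rfl),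
      Nat.card_eq_fintype_card, Fintype.card_subtype, Fin.card_filter_le_val]
  · intro b b' h
    funext i
    exact Fin.ext (by simpa using congrFun h i)

theorem quadraticFiber_eq_preimage {ℓ m : ℕ} (hmℓ : m ≤ ℓ) {x : ℝ} (hx : 0 ≤ x) :
    {y : Fin ℓ → ℝ | (∀ i : Fin ℓ, (i : ℕ) < m → y i * (y i - 1) = 0) ∧
      0 ≤ x ∧ x ≤ ∑ i ∈ Finset.univ.filter (fun i : Fin ℓ => (i : ℕ) < m),
        (2 : ℝ) ^ (i : ℕ) * y i}
      = LinearMap.funLeft ℝ ℝ (Fin.castLE hmℓ) ⁻¹' binaryExpansionsAtLeast m x := by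
  ext y
  simp only [Set.mem_ofPred_eq, Set.mem_preimage, binaryExpansionsAtLeast, LinearMap.funLeft_apply,
    Fin.sum_filter_val_lt hmℓ, hx, true_and]
  exact and_congr_left' ⟨fun h j => h _ j.2, fun h i hi => h ⟨i, hi⟩⟩

/-- Let `S ⊆ ℝ^(ℓ+1)` (coordinates `Y₁, …, Y_ℓ, X`) be defined by
`Yᵢ(Yᵢ - 1) = 0` for `1 ≤ i ≤ m` (`m ≤ ℓ`) and `0 ≤ X ≤ Y₁ + 2 Y₂ + ⋯ + 2^(m-1) Y_m`, and
let `π` be the projection onto `X`.  Then for `x ∈ {0, 1, …, 2^(m-1)}` the fibers `S_x` have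
pairwise different numbers of connected components; in particular the `2^(m-1) + 1` fibers
over these values of `x` are pairwise not homotopy equivalent, so at least `2^(m-1) + 1`
distinct homotopy types occur among the fibers. -/
theorem fibers_of_quadratic_example_have_distinct_homotopy_types (ℓ m : ℕ)
    (hm : 1 ≤ m) (hmℓ : m ≤ ℓ)
    (S : Set ((Fin ℓ → ℝ) × ℝ))
    (hS : S = {p | (∀ i : Fin ℓ, (i : ℕ) < m → p.1 i * (p.1 i - 1) = 0) ∧
      0 ≤ p.2 ∧ p.2 ≤ ∑ i ∈ Finset.univ.filter (fun i : Fin ℓ => (i : ℕ) < m),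
        (2 : ℝ) ^ (i : ℕ) * p.1 i})
    (fib : ℕ → Set (Fin ℓ → ℝ))
    (hfib : ∀ x, fib x = {y | (y, (x : ℝ)) ∈ S}) :
    (∀ x x' : ℕ, x ≤ 2 ^ (m - 1) → x' ≤ 2 ^ (m - 1) → x ≠ x' →
      Nat.card (ConnectedComponents (fib x)) ≠ Nat.card (ConnectedComponents (fib x'))) ∧
    (∀ x x' : ℕ, x ≤ 2 ^ (m - 1) → x' ≤ 2 ^ (m - 1) → x ≠ x' →
      ¬ Nonempty (ContinuousMap.HomotopyEquiv (fib x) (fib x'))) := by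
  have hcard : ∀ x : ℕ, Nat.card (ConnectedComponents (fib x)) = 2 ^ m - x := by
    intro x
    set restrict := LinearMap.funLeft ℝ ℝ (Fin.castLE hmℓ)
    have hfib_eq : fib x = restrict ⁻¹' binaryExpansionsAtLeast m x := by
      rw [hfib, hS]
      exact quadraticFiber_eq_preimage hmℓ x.cast_nonneg
    rw [hfib_eq, ← natCard_binaryExpansionsAtLeast m x]
    exact restrict.toContinuousLinearMap.natCard_connectedComponents_preimage
      (LinearMap.funLeft_surjective_of_injective _ _ _ (Fin.castLE_injective hmℓ))
      (finite_binaryExpansionsAtLeast m x)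
  have hpow : 2 ^ (m - 1) < 2 ^ m := Nat.pow_lt_pow_right one_lt_two (by omega)
  have hcard_ne : ∀ x x' : ℕ, x ≤ 2 ^ (m - 1) → x' ≤ 2 ^ (m - 1) → x ≠ x' →
      Nat.card (ConnectedComponents (fib x)) ≠ Nat.card (ConnectedComponents (fib x')) := by
    intro x x' hx hx' hne
    rw [hcard x, hcard x']
    omega
  exact ⟨hcard_ne, fun x x' hx hx' hne ⟨h⟩ =>
    hcard_ne x x' hx hx' hne h.natCard_connectedComponents_eq⟩
end

section
/- Let P_1,...,P_m ∈ R[Y_1,...,Y_ℓ] with deg P_i ≤ 2, and let P_i^h ∈ R[Y_0,...,Y_ℓ] be the homogenization of P_i with respect to Y_0 (so that P_i^h is homogeneous of degree 2 and P_i^h(1, y) = P_i(y)). Let S ⊆ R^ℓ be a bounded closed semi-algebraic set defined by a conjunction/disjunction formula in the conditions P_i ≥ 0, P_i ≤ 0, P_i = 0, intersected with the ball |y| ≤ R, and let S^h ⊆ S^ℓ be defined by the corresponding formula in P_i^h together with the homogenized ball condition. Then S^h is the disjoint union of two closed sets (in the hemispheres Y_0 > 0 and Y_0 < 0), each homeomorphic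 to S. -/
open scoped BigOperators

/-- Positive boolean (conjunction/disjunction) formulas in the atoms
`P i ≥ 0`, `P i ≤ 0`, `P i = 0` for a family of `m` polynomials. -/
inductive PFormula (m : ℕ) where
  | ge (i : Fin m)
  | le (i : Fin m)
  | eq (i : Fin m)
  | and (φ ψ : PFormula m)
  | or (φ ψ : PFormula m)

/-- Evaluation of a positive boolean formula, given the values `v i` of the polynomials. -/
def PFormula.holds {m : ℕ} : PFormula m → (Fin m → ℝ) → Prop
  | .ge i, v => 0 ≤ v i
  | .le i, v => v i ≤ 0
  | .eq i, v => v i = 0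
  | .and φ ψ, v => φ.holds v ∧ ψ.holds v
  | .or φ ψ, v => φ.holds v ∨ ψ.holds v

/-! The conditions defining `Sʰ`, apart from the sphere, cut out a closed cone `C` that is
invariant under all nonzero scalings, because the `Pᵢʰ` are homogeneous of even degree. The
homogenized ball condition forces `Y₀ ≠ 0` on `C ∖ {0}`, so `Sʰ` splits along the sign of `Y₀`,
and negation swaps the two halves. Central projection from the affine chart `Y₀ = 1`, on which
`C` restricts to `S` because `Pᵢʰ(1, y) = Pᵢ(y)`, is a homeomorphism onto the upper half. -/

open MvPolynomial

theorem MvPolynomial.IsHomogeneous.eval_smul {R σ : Type*} [CommSemiring R] [Fintype σ]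
    {φ : MvPolynomial σ R} {n : ℕ} (hφ : φ.IsHomogeneous n) (c : R) (x : σ → R) :
    eval (c • x) φ = c ^ n * eval x φ := by
  rw [eval_eq', eval_eq', Finset.mul_sum]
  refine Finset.sum_congr rfl fun d hd => ?_
  have hdeg : ∑ i, d i = n := by
    rw [← Finsupp.degree_eq_sum, Finsupp.degree_eq_weight_one]
    exact hφ (mem_support_iff.mp hd)
  simp only [Pi.smul_apply, smul_eq_mul, mul_pow, Finset.prod_mul_distrib,
    Finset.prod_pow_eq_pow_sum, hdeg]
  ring

namespace PFormula

variable {m : ℕ}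

theorem isClosed_setOf_holds (φ : PFormula m) : IsClosed {v | φ.holds v} := by
  induction φ with
  | ge i => exact isClosed_le continuous_const (continuous_apply i)
  | le i => exact isClosed_le (continuous_apply i) continuous_const
  | eq i => exact isClosed_eq (continuous_apply i) continuous_const
  | and φ ψ hφ hψ => exact hφ.inter hψ
  | or φ ψ hφ hψ => exact hφ.union hψ

theorem holds_smul_iff (φ : PFormula m) {t : ℝ} (ht : 0 < t) (v : Fin m → ℝ) :
    φ.holds (t • v) ↔ φ.holds v := by
  induction φ with
  | ge i => exact mul_nonneg_iff_of_pos_left ht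
  | le i => simpa [holds] using mul_le_mul_iff_right₀ (b := v i) (c := 0) ht
  | eq i => exact smul_eq_zero_iff_right ht.ne'
  | and φ ψ hφ hψ => exact and_congr hφ hψ
  | or φ ψ hφ hψ => exact or_congr hφ hψ

end PFormula

section CentralProjection

variable {ℓ : ℕ}

noncomputable def dehomogenize (z : Fin (ℓ + 1) → ℝ) : Fin ℓ → ℝ := fun j => z j.succ / z 0

noncomputable def toUpperHemisphere (y : Fin ℓ → ℝ) : Fin (ℓ + 1) → ℝ :=
  (√(1 + ∑ j, y j ^ 2))⁻¹ • Fin.cons 1 y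

theorem sum_sq_cons_one (y : Fin ℓ → ℝ) :
    ∑ j, (Fin.cons 1 y : Fin (ℓ + 1) → ℝ) j ^ 2 = 1 + ∑ j, y j ^ 2 := by
  simp [Fin.sum_univ_succ]

theorem sum_sq_toUpperHemisphere (y : Fin ℓ → ℝ) : ∑ j, toUpperHemisphere y j ^ 2 = 1 := by
  have hpos : 0 < 1 + ∑ j, y j ^ 2 := by positivity
  simp only [toUpperHemisphere, Pi.smul_apply, smul_eq_mul, mul_pow, ← Finset.mul_sum,
    sum_sq_cons_one, inv_pow, Real.sq_sqrt hpos.le]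
  exact inv_mul_cancel₀ hpos.ne'

theorem dehomogenize_toUpperHemisphere (y : Fin ℓ → ℝ) :
    dehomogenize (toUpperHemisphere y) = y := by
  have hN : √(1 + ∑ j, y j ^ 2) ≠ 0 := by positivity
  ext j
  simp [dehomogenize, toUpperHemisphere]
  field_simp

theorem cons_one_dehomogenize {z : Fin (ℓ + 1) → ℝ} (hz : z 0 ≠ 0) :
    Fin.cons 1 (dehomogenize z) = (z 0)⁻¹ • z := by
  ext j
  induction j using Fin.cases with
  | zero => simp [hz]
  | succ k => simp [dehomogenize, div_eq_inv_mul]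

theorem toUpperHemisphere_dehomogenize {z : Fin (ℓ + 1) → ℝ} (hz : ∑ j, z j ^ 2 = 1)
    (h0 : 0 < z 0) : toUpperHemisphere (dehomogenize z) = z := by
  have hnorm : √(1 + ∑ j, dehomogenize z j ^ 2) = (z 0)⁻¹ := by
    rw [← sum_sq_cons_one, cons_one_dehomogenize h0.ne']
    simp only [Pi.smul_apply, smul_eq_mul, mul_pow, ← Finset.mul_sum, hz, mul_one]
    exact Real.sqrt_sq (inv_pos.mpr h0).le
  rw [toUpperHemisphere, hnorm, inv_inv, cons_one_dehomogenize h0.ne', smul_inv_smul₀ h0.ne']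

theorem continuous_toUpperHemisphere : Continuous (toUpperHemisphere (ℓ := ℓ)) := by
  unfold toUpperHemisphere
  fun_prop (disch := exact fun y => by positivity)

theorem continuousOn_dehomogenize :
    ContinuousOn (dehomogenize (ℓ := ℓ)) {z | z 0 ≠ 0} :=
  continuousOn_pi.mpr fun j =>
    (continuous_apply j.succ).continuousOn.div (continuous_apply 0).continuousOn fun _ hz => hz

end CentralProjection

section Cone

variable {ℓ : ℕ}

theorem cons_one_dehomogenize_mem {C : Set (Fin (ℓ + 1) → ℝ)}
    (hC : ∀ t : ℝ, 0 < t → ∀ z ∈ C, t • z ∈ C) {z : Fin (ℓ + 1) → ℝ} (hz : z ∈ C)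
    (h0 : 0 < z 0) : Fin.cons 1 (dehomogenize z) ∈ C := by
  rw [cons_one_dehomogenize h0.ne']
  exact hC _ (inv_pos.mpr h0) z hz

theorem toUpperHemisphere_mem {C : Set (Fin (ℓ + 1) → ℝ)}
    (hC : ∀ t : ℝ, 0 < t → ∀ z ∈ C, t • z ∈ C) {y : Fin ℓ → ℝ} (hy : Fin.cons 1 y ∈ C) :
    toUpperHemisphere y ∈ C :=
  hC _ (by positivity) _ hy

theorem toUpperHemisphere_zero_pos (y : Fin ℓ → ℝ) : 0 < toUpperHemisphere y 0 := by
  simp only [toUpperHemisphere, Pi.smul_apply, Fin.cons_zero, smul_eq_mul, mul_one]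
  positivity

noncomputable def upperHemisphereConeHomeomorph (C : Set (Fin (ℓ + 1) → ℝ))
    (hC : ∀ t : ℝ, 0 < t → ∀ z ∈ C, t • z ∈ C) :
    {z | ∑ j, z j ^ 2 = 1 ∧ z ∈ C ∧ 0 < z 0} ≃ₜ {y | (Fin.cons 1 y : Fin (ℓ + 1) → ℝ) ∈ C} where
  toFun z := ⟨dehomogenize z.1, cons_one_dehomogenize_mem hC z.2.2.1 z.2.2.2⟩
  invFun y := ⟨toUpperHemisphere y.1,
    sum_sq_toUpperHemisphere y.1, toUpperHemisphere_mem hC y.2, toUpperHemisphere_zero_pos y.1⟩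
  left_inv z := Subtype.ext (toUpperHemisphere_dehomogenize z.2.1 z.2.2.2)
  right_inv y := Subtype.ext (dehomogenize_toUpperHemisphere y.1)
  continuous_toFun := (continuousOn_dehomogenize.comp_continuous continuous_subtype_val
    fun z => z.2.2.2.ne').subtype_mk _
  continuous_invFun := (continuous_toUpperHemisphere.comp continuous_subtype_val).subtype_mk _

theorem exists_sphere_inter_cone_eq_union_hemispheres (C : Set (Fin (ℓ + 1) → ℝ))
    (hC_closed : IsClosed C) (hC_smul : ∀ t : ℝ, t ≠ 0 → ∀ z ∈ C, t • z ∈ C)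
    (hC_axis : ∀ z ∈ C, z 0 = 0 → z = 0) :
    ∃ Sp Sn : Set (Fin (ℓ + 1) → ℝ),
      {z | ∑ j, z j ^ 2 = 1 ∧ z ∈ C} = Sp ∪ Sn ∧ Disjoint Sp Sn ∧
      (∀ z ∈ Sp, 0 < z 0) ∧ (∀ z ∈ Sn, z 0 < 0) ∧
      IsClosed Sp ∧ IsClosed Sn ∧
      Nonempty (Sp ≃ₜ {y | (Fin.cons 1 y : Fin (ℓ + 1) → ℝ) ∈ C}) ∧
      Nonempty (Sn ≃ₜ {y | (Fin.cons 1 y : Fin (ℓ + 1) → ℝ) ∈ C}) := by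
  set Sp := {z : Fin (ℓ + 1) → ℝ | ∑ j, z j ^ 2 = 1 ∧ z ∈ C ∧ 0 < z 0}
  have hneg_mem : ∀ z, -z ∈ C ↔ z ∈ C := fun z =>
    ⟨fun h => by simpa using hC_smul (-1) (by norm_num) _ h,
      fun h => by simpa using hC_smul (-1) (by norm_num) _ h⟩
  have hz0 : ∀ z, ∑ j, z j ^ 2 = 1 → z ∈ C → z 0 ≠ 0 := fun z hz hzC h0 => by
    simp [hC_axis z hzC h0] at hz
  have hSp : Sp = {z | ∑ j, z j ^ 2 = 1 ∧ z ∈ C} ∩ {z | 0 ≤ z 0} := by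
    ext z
    exact ⟨fun ⟨hz, hzC, h0⟩ => ⟨⟨hz, hzC⟩, h0.le⟩,
      fun ⟨⟨hz, hzC⟩, h0⟩ => ⟨hz, hzC, h0.lt_of_ne' (hz0 z hz hzC)⟩⟩
  have hSp_closed : IsClosed Sp := by
    rw [hSp]
    exact ((isClosed_eq (by fun_prop) continuous_const).inter hC_closed).inter
      (isClosed_le continuous_const (continuous_apply 0))
  refine ⟨Sp, -Sp, ?_, ?_, fun z hz => hz.2.2, fun z hz => neg_pos.mp hz.2.2, hSp_closed,
    hSp_closed.neg, ⟨upperHemisphereConeHomeomorph C fun t ht => hC_smul t ht.ne'⟩,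
    ⟨((Homeomorph.neg _).subtype fun _ => Iff.rfl).trans
      (upperHemisphereConeHomeomorph C fun t ht => hC_smul t ht.ne')⟩⟩
  · ext z
    simp only [Sp, Set.mem_union, Set.mem_neg, Set.mem_ofPred_eq, hneg_mem, Pi.neg_apply, neg_sq,
      neg_pos]
    constructor
    · rintro ⟨hz, hzC⟩
      exact (lt_or_gt_of_ne (hz0 z hz hzC)).symm.imp (⟨hz, hzC, ·⟩) (⟨hz, hzC, ·⟩)
    · rintro (⟨hz, hzC, -⟩ | ⟨hz, hzC, -⟩) <;> exact ⟨hz, hzC⟩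
  · exact Set.disjoint_left.mpr fun z hz hz' => (neg_pos.mp hz'.2.2).not_gt hz.2.2

end Cone

/-- `Sʰ` is the trace of this cone on the unit sphere. -/
def homogenizedCone {ℓ m : ℕ} (φ : PFormula m) (Ph : Fin m → MvPolynomial (Fin (ℓ + 1)) ℝ)
    (R : ℝ) : Set (Fin (ℓ + 1) → ℝ) :=
  {z | φ.holds (fun i => eval z (Ph i)) ∧ ∑ j : Fin ℓ, z j.succ ^ 2 ≤ R ^ 2 * z 0 ^ 2}

section HomogenizedCone

variable {ℓ m : ℕ} (φ : PFormula m) (Ph : Fin m → MvPolynomial (Fin (ℓ + 1)) ℝ) (R : ℝ)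

theorem isClosed_homogenizedCone : IsClosed (homogenizedCone φ Ph R) := by
  rw [homogenizedCone, Set.ofPred_and]
  refine IsClosed.inter ?_ (isClosed_le ?_ ?_)
  · exact φ.isClosed_setOf_holds.preimage (continuous_pi fun i => continuous_eval (Ph i))
  all_goals fun_prop

theorem smul_mem_homogenizedCone {n : ℕ} (hPh : ∀ i, (Ph i).IsHomogeneous n) (hn : Even n)
    {t : ℝ} (ht : t ≠ 0) {z : Fin (ℓ + 1) → ℝ} (hz : z ∈ homogenizedCone φ Ph R) :
    t • z ∈ homogenizedCone φ Ph R := by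
  obtain ⟨hφ, hball⟩ := hz
  have hball' : t ^ 2 * ∑ j : Fin ℓ, z j.succ ^ 2 ≤ t ^ 2 * (R ^ 2 * z 0 ^ 2) :=
    mul_le_mul_of_nonneg_left hball (sq_nonneg t)
  refine ⟨?_, ?_⟩
  · simp only [(hPh _).eval_smul]
    exact (φ.holds_smul_iff (hn.pow_pos ht) _).mpr hφ
  · simp only [Pi.smul_apply, smul_eq_mul, mul_pow, ← Finset.mul_sum] at hball' ⊢
    linarith

theorem eq_zero_of_mem_homogenizedCone {z : Fin (ℓ + 1) → ℝ} (hz : z ∈ homogenizedCone φ Ph R)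
    (h0 : z 0 = 0) : z = 0 := by
  have hsum : ∑ j : Fin ℓ, z j.succ ^ 2 = 0 :=
    le_antisymm (by simpa [h0] using hz.2) (Finset.sum_nonneg fun j _ => sq_nonneg _)
  ext j
  induction j using Fin.cases with
  | zero => exact h0
  | succ k =>
    exact pow_eq_zero_iff two_ne_zero |>.mp <|
      (Finset.sum_eq_zero_iff_of_nonneg fun j _ => sq_nonneg _).mp hsum k (Finset.mem_univ k)

end HomogenizedCone

theorem homogenization_doubles_the_set_general (ℓ m : ℕ) (R : ℝ)
    (P : Fin m → MvPolynomial (Fin ℓ) ℝ)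
    (Ph : Fin m → MvPolynomial (Fin (ℓ + 1)) ℝ)
    (hPhhom : ∀ i, (Ph i).IsHomogeneous 2)
    (hPh : ∀ i (y : Fin ℓ → ℝ),
      MvPolynomial.eval (Fin.cons (1 : ℝ) y) (Ph i) = MvPolynomial.eval y (P i))
    (φ : PFormula m)
    (S : Set (Fin ℓ → ℝ))
    (hS : S = {y | φ.holds (fun i => MvPolynomial.eval y (P i)) ∧ ∑ j, y j ^ 2 ≤ R ^ 2})
    (Sh : Set (Fin (ℓ + 1) → ℝ))
    (hSh : Sh = {z | (∑ j, z j ^ 2 = 1) ∧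
      φ.holds (fun i => MvPolynomial.eval z (Ph i)) ∧
      ∑ j : Fin ℓ, z j.succ ^ 2 ≤ R ^ 2 * z 0 ^ 2}) :
    ∃ Sp Sn : Set (Fin (ℓ + 1) → ℝ),
      Sh = Sp ∪ Sn ∧ Disjoint Sp Sn ∧
      (∀ z ∈ Sp, 0 < z 0) ∧ (∀ z ∈ Sn, z 0 < 0) ∧
      IsClosed Sp ∧ IsClosed Sn ∧
      Nonempty (Sp ≃ₜ S) ∧ Nonempty (Sn ≃ₜ S) := by
  have hS_chart : S = {y | (Fin.cons 1 y : Fin (ℓ + 1) → ℝ) ∈ homogenizedCone φ Ph R} := by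
    simp [hS, homogenizedCone, hPh]
  have hSh_cone : Sh = {z | ∑ j, z j ^ 2 = 1 ∧ z ∈ homogenizedCone φ Ph R} := hSh
  rw [hS_chart, hSh_cone]
  exact exists_sphere_inter_cone_eq_union_hemispheres _ (isClosed_homogenizedCone φ Ph R)
    (fun _ ht _ => smul_mem_homogenizedCone φ Ph R hPhhom even_two ht)
    (fun _ => eq_zero_of_mem_homogenizedCone φ Ph R)

/-- Let `P₁, …, P_m ∈ ℝ[Y₁, …, Y_ℓ]` have degree `≤ 2`, and let `Pᵢʰ` be
the homogenization of `Pᵢ` with respect to a new variable `Y₀` (characterized by: `Pᵢʰ` is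
homogeneous of degree `2` and `Pᵢʰ(1, y) = Pᵢ(y)`).  Let `S ⊆ ℝᶫ` be the (bounded, closed)
set defined by a conjunction/disjunction formula `φ` in the conditions `Pᵢ ≥ 0`, `Pᵢ ≤ 0`,
`Pᵢ = 0`, intersected with the ball `|y| ≤ R` (`R > 0`), and let `Sʰ ⊆ Sᶫ` be defined on the
unit sphere by the corresponding formula in the `Pᵢʰ` together with the homogenized ball
condition.  Then `Sʰ` is the disjoint union of two closed sets, contained in the hemispheres
`Y₀ > 0` and `Y₀ < 0` respectively, each homeomorphic to `S`. -/
theorem homogenization_doubles_the_set (ℓ m : ℕ) (R : ℝ) (hR : 0 < R)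
    (P : Fin m → MvPolynomial (Fin ℓ) ℝ)
    (hdeg : ∀ i, (P i).totalDegree ≤ 2)
    (Ph : Fin m → MvPolynomial (Fin (ℓ + 1)) ℝ)
    (hPhhom : ∀ i, (Ph i).IsHomogeneous 2)
    (hPh : ∀ i (y : Fin ℓ → ℝ),
      MvPolynomial.eval (Fin.cons (1 : ℝ) y) (Ph i) = MvPolynomial.eval y (P i))
    (φ : PFormula m)
    (S : Set (Fin ℓ → ℝ))
    (hS : S = {y | φ.holds (fun i => MvPolynomial.eval y (P i)) ∧ ∑ j, y j ^ 2 ≤ R ^ 2})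
    (Sh : Set (Fin (ℓ + 1) → ℝ))
    (hSh : Sh = {z | (∑ j, z j ^ 2 = 1) ∧
      φ.holds (fun i => MvPolynomial.eval z (Ph i)) ∧
      ∑ j : Fin ℓ, z j.succ ^ 2 ≤ R ^ 2 * z 0 ^ 2}) :
    ∃ Sp Sn : Set (Fin (ℓ + 1) → ℝ),
      Sh = Sp ∪ Sn ∧ Disjoint Sp Sn ∧
      (∀ z ∈ Sp, 0 < z 0) ∧ (∀ z ∈ Sn, z 0 < 0) ∧
      IsClosed Sp ∧ IsClosed Sn ∧
      Nonempty (Sp ≃ₜ S) ∧ Nonempty (Sn ≃ₜ S) :=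
  homogenization_doubles_the_set_general ℓ m R P Ph hPhhom hPh φ S hS Sh hSh
end
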